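/- arXiv:1807.04271 — 7 statements merged into one kernel-verified Lean document; each statement's English description precedes it below -/
import Mathlib

section
/- For nonzero vectors x, y in R^n with ‖x − y‖ ≤ ε (ℓ² norm), the total variation distance between the distributions D_x and D_y (where D_x(i) = x_i²/‖x‖²) is at most 2ε/‖x‖. -/
lemma euclid_norm_sq {n : ℕ} (w : EuclideanSpace ℝ (Fin n)) :
    ‖w‖ ^ 2 = ∑ i, (w i) ^ 2 := by
  rw [EuclideanSpace.norm_eq, Real.sq_sqrt (by positivity)]
  simp [sq_abs]

theorem stmt_0 {n : ℕ} (x y : EuclideanSpace ℝ (Fin n)) (hx : x ≠ 0) (hy : y ≠ 0)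
    (ε : ℝ) (hxy : ‖x - y‖ ≤ ε) :
    (1 / 2) * ∑ i, |x i ^ 2 / ‖x‖ ^ 2 - y i ^ 2 / ‖y‖ ^ 2| ≤ 2 * ε / ‖x‖ := by
  have ha : 0 < ‖x‖ := norm_pos_iff.2 hx
  have hb : 0 < ‖y‖ := norm_pos_iff.2 hy
  set u : EuclideanSpace ℝ (Fin n) := ‖x‖⁻¹ • x with hu
  set v : EuclideanSpace ℝ (Fin n) := ‖y‖⁻¹ • y with hv
  have hun : ‖u‖ = 1 := by
    rw [hu, norm_smul, norm_inv, norm_norm, inv_mul_cancel₀ ha.ne']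
  have hvn : ‖v‖ = 1 := by
    rw [hv, norm_smul, norm_inv, norm_norm, inv_mul_cancel₀ hb.ne']
  -- rewrite the summand
  have hsum : ∀ i, |x i ^ 2 / ‖x‖ ^ 2 - y i ^ 2 / ‖y‖ ^ 2|
      = |u i - v i| * |u i + v i| := by
    intro i
    have hui : u i = ‖x‖⁻¹ * x i := rfl
    have hvi : v i = ‖y‖⁻¹ * y i := rfl
    rw [← abs_mul]
    congr 1
    rw [hui, hvi]
    field_simp
    ring
  -- Cauchy-Schwarz
  have hCS : (∑ i, |u i - v i| * |u i + v i|) ^ 2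
      ≤ (∑ i, (u i - v i) ^ 2) * ∑ i, (u i + v i) ^ 2 := by
    have := Finset.sum_mul_sq_le_sq_mul_sq Finset.univ
      (fun i => |u i - v i|) (fun i => |u i + v i|)
    simpa [sq_abs] using this
  have h1 : (∑ i, (u i - v i) ^ 2) = ‖u - v‖ ^ 2 := by
    rw [euclid_norm_sq]
    exact Finset.sum_congr rfl fun i _ => by simp [PiLp.sub_apply]
  have h2 : (∑ i, (u i + v i) ^ 2) = ‖u + v‖ ^ 2 := by
    rw [euclid_norm_sq]
    exact Finset.sum_congr rfl fun i _ => by simp [PiLp.add_apply]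
  have huv2 : ‖u + v‖ ≤ 2 := by
    calc ‖u + v‖ ≤ ‖u‖ + ‖v‖ := norm_add_le _ _
    _ = 2 := by rw [hun, hvn]; norm_num
  -- bound ‖u - v‖
  have hkey : ‖u - v‖ ≤ 2 * ‖x - y‖ / ‖x‖ := by
    have hdecomp : u - v = ‖x‖⁻¹ • (x - y) + (‖x‖⁻¹ - ‖y‖⁻¹) • y := by
      rw [hu, hv]
      rw [smul_sub, sub_smul]
      abel
    rw [hdecomp]
    have hnorms : |‖x‖ - ‖y‖| ≤ ‖x - y‖ := abs_norm_sub_norm_le x y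
    calc ‖‖x‖⁻¹ • (x - y) + (‖x‖⁻¹ - ‖y‖⁻¹) • y‖
        ≤ ‖‖x‖⁻¹ • (x - y)‖ + ‖(‖x‖⁻¹ - ‖y‖⁻¹) • y‖ := norm_add_le _ _
      _ = ‖x‖⁻¹ * ‖x - y‖ + |‖x‖⁻¹ - ‖y‖⁻¹| * ‖y‖ := by
          rw [norm_smul, norm_smul]
          simp [abs_of_pos (inv_pos.2 ha), Real.norm_eq_abs]
      _ ≤ ‖x‖⁻¹ * ‖x - y‖ + ‖x - y‖ / ‖x‖ := by
          have : |‖x‖⁻¹ - ‖y‖⁻¹| * ‖y‖ = |‖y‖ - ‖x‖| / ‖x‖ := by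
            rw [abs_sub_comm (‖x‖) (‖y‖)] at *
            rw [show ‖x‖⁻¹ - ‖y‖⁻¹ = (‖y‖ - ‖x‖) / (‖x‖ * ‖y‖) by
              field_simp]
            rw [abs_div, abs_of_pos (mul_pos ha hb)]
            field_simp
          rw [this]
          have h3 : |‖y‖ - ‖x‖| ≤ ‖x - y‖ := by
            rw [abs_sub_comm]; exact hnorms
          gcongr
      _ = 2 * ‖x - y‖ / ‖x‖ := by field_simp; ring
  -- combine
  have hS : (∑ i, |u i - v i| * |u i + v i|) ≤ ‖u - v‖ * ‖u + v‖ := by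
    have hSnn : (0:ℝ) ≤ ∑ i, |u i - v i| * |u i + v i| :=
      Finset.sum_nonneg fun i _ => mul_nonneg (abs_nonneg _) (abs_nonneg _)
    have hRnn : (0:ℝ) ≤ ‖u - v‖ * ‖u + v‖ := mul_nonneg (norm_nonneg _) (norm_nonneg _)
    have hsq : (∑ i, |u i - v i| * |u i + v i|) ^ 2 ≤ (‖u - v‖ * ‖u + v‖) ^ 2 := by
      rw [mul_pow]
      calc (∑ i, |u i - v i| * |u i + v i|) ^ 2
          ≤ (∑ i, (u i - v i) ^ 2) * ∑ i, (u i + v i) ^ 2 := hCS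
        _ = ‖u - v‖ ^ 2 * ‖u + v‖ ^ 2 := by rw [h1, h2]
    exact (abs_le_of_sq_le_sq' hsq hRnn).2
  have hεnn : ‖x - y‖ ≤ ε := hxy
  calc (1 / 2) * ∑ i, |x i ^ 2 / ‖x‖ ^ 2 - y i ^ 2 / ‖y‖ ^ 2|
      = (1 / 2) * ∑ i, |u i - v i| * |u i + v i| := by
        congr 1; exact Finset.sum_congr rfl fun i _ => hsum i
    _ ≤ (1 / 2) * (‖u - v‖ * ‖u + v‖) := by linarith
    _ ≤ (1 / 2) * ((2 * ‖x - y‖ / ‖x‖) * 2) := by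
        have h4 : ‖u - v‖ * ‖u + v‖ ≤ (2 * ‖x - y‖ / ‖x‖) * 2 := by
          have := mul_le_mul hkey huv2 (norm_nonneg _) (by positivity)
          exact this
        linarith
    _ = 2 * ‖x - y‖ / ‖x‖ := by field_simp
    _ ≤ 2 * ε / ‖x‖ := by gcongr
end

section
/- Let x ∈ R^n be nonzero and y ∈ R^n. Let Z be the random variable taking value y_i/x_i with probability x_i²/‖x‖² (over indices i with x_i ≠ 0). Then E[Z] = ⟨x,y⟩/‖x‖² and Var[Z] ≤ ‖y‖²/‖x‖². -/
/-! The weight `x i ^ 2` cancels the denominator of `y i / x i`: index `i` contributes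
`x i * y i / ‖x‖ ^ 2` to the mean and at most `y i ^ 2 / ‖x‖ ^ 2` to the second moment, and a
variance never exceeds the second moment. -/

open RealInnerProductSpace

lemma sq_mul_ite_div (a b : ℝ) : a ^ 2 * (if a ≠ 0 then b / a else 0) = a * b := by
  split_ifs with ha
  · field_simp
  · simp [not_not.mp ha]

lemma sq_mul_ite_div_sq_le (a b : ℝ) : a ^ 2 * (if a ≠ 0 then b / a else 0) ^ 2 ≤ b ^ 2 := by
  split_ifs with ha
  · exact (by field_simp : a ^ 2 * (b / a) ^ 2 = b ^ 2).le
  · simpa using sq_nonneg b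

lemma Finset.sum_mul_sub_sum_mul_sq_le {ι : Type*} (s : Finset ι) (p z : ι → ℝ)
    (hp : ∑ i ∈ s, p i = 1) :
    ∑ i ∈ s, p i * (z i - ∑ j ∈ s, p j * z j) ^ 2 ≤ ∑ i ∈ s, p i * z i ^ 2 := by
  set m := ∑ j ∈ s, p j * z j
  have expand : ∑ i ∈ s, p i * (z i - m) ^ 2
      = ∑ i ∈ s, p i * z i ^ 2 - 2 * m * ∑ i ∈ s, p i * z i + m ^ 2 * ∑ i ∈ s, p i := by
    simp only [Finset.mul_sum, ← Finset.sum_sub_distrib, ← Finset.sum_add_distrib]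
    exact Finset.sum_congr rfl fun i _ => by ring
  rw [expand, hp]
  nlinarith [sq_nonneg m]

namespace EuclideanSpace

variable {ι : Type*} [Fintype ι]

lemma inner_eq_sum_mul (x y : EuclideanSpace ℝ ι) : ⟪x, y⟫ = ∑ i, x i * y i := by
  simp [PiLp.inner_apply, mul_comm]

lemma norm_sq_eq_sum_sq (x : EuclideanSpace ℝ ι) : ‖x‖ ^ 2 = ∑ i, x i ^ 2 := by
  simp [EuclideanSpace.norm_sq_eq]

lemma sum_sq_div_norm_sq {x : EuclideanSpace ℝ ι} (hx : x ≠ 0) :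
    ∑ i, x i ^ 2 / ‖x‖ ^ 2 = 1 := by
  rw [← Finset.sum_div, ← norm_sq_eq_sum_sq, div_self (by positivity)]

lemma sum_sq_div_norm_sq_mul_ite_div (x y : EuclideanSpace ℝ ι) :
    ∑ i, (x i ^ 2 / ‖x‖ ^ 2) * (if x i ≠ 0 then y i / x i else 0) = ⟪x, y⟫ / ‖x‖ ^ 2 := by
  simp only [div_mul_eq_mul_div, sq_mul_ite_div, ← Finset.sum_div, inner_eq_sum_mul]

lemma sum_sq_div_norm_sq_mul_ite_div_sq_le (x y : EuclideanSpace ℝ ι) :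
    ∑ i, (x i ^ 2 / ‖x‖ ^ 2) * (if x i ≠ 0 then y i / x i else 0) ^ 2 ≤ ‖y‖ ^ 2 / ‖x‖ ^ 2 := by
  simp only [div_mul_eq_mul_div, ← Finset.sum_div, norm_sq_eq_sum_sq y]
  gcongr with i
  exact sq_mul_ite_div_sq_le (x i) (y i)

end EuclideanSpace

theorem stmt_3 {n : ℕ} (x y : EuclideanSpace ℝ (Fin n)) (hx : x ≠ 0) :
    (∑ i, (x i ^ 2 / ‖x‖ ^ 2) * (if x i ≠ 0 then y i / x i else 0)) = ⟪x, y⟫ / ‖x‖ ^ 2 ∧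
    (∑ i, (x i ^ 2 / ‖x‖ ^ 2) *
        ((if x i ≠ 0 then y i / x i else 0) - ⟪x, y⟫ / ‖x‖ ^ 2) ^ 2)
      ≤ ‖y‖ ^ 2 / ‖x‖ ^ 2 := by
  have hmean := EuclideanSpace.sum_sq_div_norm_sq_mul_ite_div x y
  refine ⟨hmean, ?_⟩
  rw [← hmean]
  exact (Finset.sum_mul_sub_sum_mul_sq_le _ _ _ (EuclideanSpace.sum_sq_div_norm_sq hx)).trans
    (EuclideanSpace.sum_sq_div_norm_sq_mul_ite_div_sq_le x y)
end

section
/- If a Hermitian matrix A ∈ C^{n×n} satisfies ‖A² − A‖_F ≤ ε, then there exists an orthogonal projector P (P² = P, P Hermitian) with ‖A − P‖_F ≤ ε + 4ε². -/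
/-!
Round every eigenvalue of `A` to the nearer of `0` and `1`: the resulting function of `A` is an
orthogonal projector `P`. Frobenius norms of real functions of `A` are the `ℓ²` norms of their values
on the eigenvalues. For an eigenvalue `x` with `e = |x² - x|` the rounding error is at most
`e + 4e² ≤ (1 + 4ε) e`, since `e ≤ ‖A² - A‖_F ≤ ε`; summing squares gives `(1 + 4ε) ε`.
-/

noncomputable def frob {n : ℕ} (A : Matrix (Fin n) (Fin n) ℂ) : ℝ :=
  Real.sqrt (∑ i, ∑ j, ‖A i j‖ ^ 2)

open Matrix

lemma Matrix.IsHermitian.trace_cfc {ι 𝕜 : Type*} [Fintype ι] [DecidableEq ι] [RCLike 𝕜]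
    {A : Matrix ι ι 𝕜} (hA : A.IsHermitian) (f : ℝ → ℝ) :
    (cfc f A).trace = ∑ i, (f (hA.eigenvalues i) : 𝕜) := by
  rw [hA.cfc_eq, IsHermitian.cfc, Unitary.conjStarAlgAut_apply, trace_mul_cycle,
    Unitary.coe_star_mul_self, one_mul, trace_diagonal]
  rfl

lemma frob_nonneg {n : ℕ} (M : Matrix (Fin n) (Fin n) ℂ) : 0 ≤ frob M :=
  Real.sqrt_nonneg _

lemma frob_sq_eq_re_trace {n : ℕ} (M : Matrix (Fin n) (Fin n) ℂ) :
    frob M ^ 2 = (Mᴴ * M).trace.re := by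
  rw [frob, Real.sq_sqrt (by positivity), Finset.sum_comm]
  simp only [trace, diag, mul_apply, conjTranspose_apply, Complex.re_sum, Complex.star_def,
    ← Complex.normSq_eq_conj_mul_self, Complex.ofReal_re, Complex.sq_norm]

lemma frob_cfc {n : ℕ} {A : Matrix (Fin n) (Fin n) ℂ} (hA : A.IsHermitian) (f : ℝ → ℝ) :
    frob (cfc f A) = √(∑ i, f (hA.eigenvalues i) ^ 2) := by
  have hfin := (spectrum ℝ A).toFinite
  rw [← Real.sqrt_sq (frob_nonneg _), frob_sq_eq_re_trace,
    (cfc_predicate f A).isHermitian.eq, ← cfc_mul f f A (hfin.continuousOn f) (hfin.continuousOn f),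
    hA.trace_cfc, Complex.re_sum]
  simp [sq]

noncomputable def roundToZeroOne (x : ℝ) : ℝ := if 1 / 2 ≤ x then 1 else 0

lemma roundToZeroOne_mul_self (x : ℝ) : roundToZeroOne x * roundToZeroOne x = roundToZeroOne x := by
  unfold roundToZeroOne; split_ifs <;> norm_num

lemma abs_sub_roundToZeroOne_le (x : ℝ) :
    |x - roundToZeroOne x| ≤ (1 + 4 * |x ^ 2 - x|) * |x ^ 2 - x| := by
  unfold roundToZeroOne
  split_ifs with hx
  · rcases le_total 1 x with h1 | h1
    · rw [abs_of_nonneg (by linarith : 0 ≤ x - 1), abs_of_nonneg (by nlinarith : 0 ≤ x ^ 2 - x)]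
      nlinarith [mul_nonneg (sub_nonneg.2 h1) (sub_nonneg.2 h1)]
    · rw [abs_of_nonpos (by linarith : x - 1 ≤ 0), abs_of_nonpos (by nlinarith : x ^ 2 - x ≤ 0)]
      nlinarith [mul_nonneg (sub_nonneg.2 h1) (sub_nonneg.2 hx)]
  · rcases le_total 0 x with h0 | h0
    · rw [sub_zero, abs_of_nonneg h0, abs_of_nonpos (by nlinarith : x ^ 2 - x ≤ 0)]
      nlinarith [mul_nonneg h0 (by linarith : (0:ℝ) ≤ 1 / 2 - x)]
    · rw [sub_zero, abs_of_nonpos h0, abs_of_nonneg (by nlinarith : 0 ≤ x ^ 2 - x)]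
      nlinarith

lemma sqrt_sum_sq_le_mul_of_abs_le {ι : Type*} [Fintype ι] {d e : ι → ℝ} {c : ℝ} (hc : 0 ≤ c)
    (h : ∀ i, |d i| ≤ c * |e i|) : √(∑ i, d i ^ 2) ≤ c * √(∑ i, e i ^ 2) := by
  rw [← Real.sqrt_sq hc, ← Real.sqrt_mul (sq_nonneg c), Finset.mul_sum]
  refine Real.sqrt_le_sqrt (Finset.sum_le_sum fun i _ => ?_)
  calc d i ^ 2 = |d i| ^ 2 := (sq_abs _).symm
    _ ≤ (c * |e i|) ^ 2 := pow_le_pow_left₀ (abs_nonneg _) (h i) 2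
    _ = c ^ 2 * e i ^ 2 := by rw [mul_pow, sq_abs]

theorem stmt_6 {n : ℕ} (A : Matrix (Fin n) (Fin n) ℂ) (hA : A.IsHermitian) (ε : ℝ)
    (h : frob (A * A - A) ≤ ε) :
    ∃ P : Matrix (Fin n) (Fin n) ℂ, P.IsHermitian ∧ P * P = P ∧
      frob (A - P) ≤ ε + 4 * ε ^ 2 := by
  -- the spectrum is finite, so every function is continuous on it and `cfc` is never junk
  have hfin := (spectrum ℝ A).toFinite
  set μ := hA.eigenvalues
  have hε : √(∑ i, (μ i ^ 2 - μ i) ^ 2) ≤ ε := by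
    have : A * A - A = cfc (fun x : ℝ => x ^ 2 - x) A := by
      rw [cfc_sub _ _ A (hfin.continuousOn _) (hfin.continuousOn _), cfc_pow_id A 2, cfc_id' ℝ A,
        sq]
    rwa [this, frob_cfc hA] at h
  refine ⟨cfc roundToZeroOne A, IsSelfAdjoint.isHermitian (cfc_predicate _ A), ?_, ?_⟩
  · rw [← cfc_mul _ _ A (hfin.continuousOn _) (hfin.continuousOn _)]
    simp only [roundToZeroOne_mul_self]
  have hε0 : 0 ≤ ε := (Real.sqrt_nonneg _).trans hε
  have hμ i : |μ i - roundToZeroOne (μ i)| ≤ (1 + 4 * ε) * |μ i ^ 2 - μ i| := by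
    have hi : |μ i ^ 2 - μ i| ≤ ε :=
      (Real.abs_le_sqrt (Finset.single_le_sum (fun j _ => sq_nonneg (μ j ^ 2 - μ j))
        (Finset.mem_univ i))).trans hε
    exact (abs_sub_roundToZeroOne_le _).trans (by gcongr)
  have hAP : A - cfc roundToZeroOne A = cfc (fun x => x - roundToZeroOne x) A := by
    rw [cfc_sub _ _ A (hfin.continuousOn _) (hfin.continuousOn _), cfc_id' ℝ A]
  calc frob (A - cfc roundToZeroOne A)
      = √(∑ i, (μ i - roundToZeroOne (μ i)) ^ 2) := by rw [hAP, frob_cfc hA]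
    _ ≤ (1 + 4 * ε) * ε :=
        (sqrt_sum_sq_le_mul_of_abs_le (by positivity) hμ).trans (by gcongr)
    _ = ε + 4 * ε ^ 2 := by ring
end

section
/- Let σ_1 ≥ σ_2 ≥ ... ≥ σ_N ≥ 0, let k ≤ N, and let a_1,...,a_N ∈ [0,1] satisfy Σ a_i = k and Σ_{i=1}^k σ_i² ≤ Σ_{i=1}^N σ_i² a_i + ε σ_k². Let 0 < η ≤ 1 and let L = max{i : σ_i ≥ σ_k(1+η)}. Then Σ_{i=1}^L σ_i² (1 − a_i) ≤ ε(1+η)²σ_k²/(2η+η²) ≤ ε(1 + 1/η)σ_k². -/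
/-!
Put `w i = σ i ^ 2`. Every term of `∑ i ≤ N, (w i - w k) * ([i ≤ k] - a i)` is nonnegative, since both
factors are `≥ 0` for `i ≤ k` and `≤ 0` for `i > k`; because `∑ a i = k` the sum equals
`∑ i ≤ k, w i - ∑ i ≤ N, w i * a i ≤ ε * w k`. Dropping terms bounds the head sum:
`S ≤ w k * T + ε * w k` with `S = ∑ i ≤ L, w i * (1 - a i)` and `T = ∑ i ≤ L, (1 - a i)`.
On the other hand `w i ≥ (1 + η) ^ 2 * w k` for `i ≤ L`, so `(1 + η) ^ 2 * w k * T ≤ S`.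
Eliminating `T` gives `((1 + η) ^ 2 - 1) * S ≤ ε * (1 + η) ^ 2 * w k`.
-/

open Finset

section Excess

variable {N k : ℕ} {w a : ℕ → ℝ}

lemma mul_indicator_sub_nonneg (hw : AntitoneOn w ↑(Icc 1 N)) (hk : k ∈ Icc 1 N)
    {i : ℕ} (hi : i ∈ Icc 1 N) (ha : a i ∈ Set.Icc (0 : ℝ) 1) :
    0 ≤ (w i - w k) * ((if i ≤ k then 1 else 0) - a i) := by
  split_ifs with hik
  · exact mul_nonneg (sub_nonneg.2 (hw (mem_coe.2 hi) (mem_coe.2 hk) hik)) (sub_nonneg.2 ha.2)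
  · exact mul_nonneg_of_nonpos_of_nonpos
      (sub_nonpos.2 (hw (mem_coe.2 hk) (mem_coe.2 hi) (not_le.1 hik).le)) (by linarith [ha.1])

lemma sum_Icc_mul_indicator_sub_eq (hkN : k ≤ N) (hsum : ∑ i ∈ Icc 1 N, a i = (k : ℝ)) :
    ∑ i ∈ Icc 1 N, (w i - w k) * ((if i ≤ k then 1 else 0) - a i)
      = ∑ i ∈ Icc 1 k, w i - ∑ i ∈ Icc 1 N, w i * a i := by
  have hfilter : (Icc 1 N).filter (· ≤ k) = Icc 1 k := by
    ext i; simp only [mem_filter, mem_Icc]; omega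
  have hind : ∑ i ∈ Icc 1 N, (if i ≤ k then (1 : ℝ) else 0) = k := by
    rw [sum_ite, sum_const, sum_const_zero, hfilter, Nat.card_Icc]; simp
  have hwind : ∑ i ∈ Icc 1 N, w i * (if i ≤ k then (1 : ℝ) else 0) = ∑ i ∈ Icc 1 k, w i := by
    simp only [mul_ite, mul_one, mul_zero]
    rw [sum_ite, sum_const_zero, add_zero, hfilter]
  simp only [sub_mul, mul_sub, sum_sub_distrib, ← mul_sum, hwind, hind, hsum]
  ring

lemma sum_Icc_mul_one_sub_le {L : ℕ} {ε : ℝ} (hw : AntitoneOn w ↑(Icc 1 N)) (hk : k ∈ Icc 1 N)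
    (ha : ∀ i ∈ Icc 1 N, a i ∈ Set.Icc (0 : ℝ) 1) (hsum : ∑ i ∈ Icc 1 N, a i = (k : ℝ))
    (hmain : ∑ i ∈ Icc 1 k, w i ≤ ∑ i ∈ Icc 1 N, w i * a i + ε * w k) (hLN : L ≤ N) :
    ∑ i ∈ Icc 1 L, w i * (1 - a i) ≤ w k * ∑ i ∈ Icc 1 L, (1 - a i) + ε * w k := by
  have hsub : Icc 1 L ⊆ Icc 1 N := Icc_subset_Icc_right hLN
  have hterm : ∀ i ∈ Icc 1 L,
      (w i - w k) * (1 - a i) ≤ (w i - w k) * ((if i ≤ k then 1 else 0) - a i) := by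
    intro i hi
    split_ifs with hik
    · exact le_rfl
    · have hwi : w i ≤ w k :=
        hw (mem_coe.2 hk) (mem_coe.2 (hsub hi)) (not_le.1 hik).le
      nlinarith
  suffices ∑ i ∈ Icc 1 L, w i * (1 - a i) - w k * ∑ i ∈ Icc 1 L, (1 - a i) ≤ ε * w k by
    linarith
  calc ∑ i ∈ Icc 1 L, w i * (1 - a i) - w k * ∑ i ∈ Icc 1 L, (1 - a i)
      = ∑ i ∈ Icc 1 L, (w i - w k) * (1 - a i) := by
        rw [mul_sum, ← sum_sub_distrib]; simp only [sub_mul]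
    _ ≤ ∑ i ∈ Icc 1 L, (w i - w k) * ((if i ≤ k then 1 else 0) - a i) := sum_le_sum hterm
    _ ≤ ∑ i ∈ Icc 1 N, (w i - w k) * ((if i ≤ k then 1 else 0) - a i) :=
        sum_le_sum_of_subset_of_nonneg hsub fun i hi _ =>
          mul_indicator_sub_nonneg hw hk hi (ha i hi)
    _ = ∑ i ∈ Icc 1 k, w i - ∑ i ∈ Icc 1 N, w i * a i :=
        sum_Icc_mul_indicator_sub_eq (mem_Icc.1 hk).2 hsum
    _ ≤ ε * w k := by linarith

end Excess

lemma one_add_sq_div_le {η : ℝ} (hη : 0 < η) : (1 + η) ^ 2 / (2 * η + η ^ 2) ≤ 1 + 1 / η := by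
  rw [div_le_iff₀ (by positivity)]
  field_simp
  nlinarith

theorem stmt_10_general (N k L : ℕ) (σ a : ℕ → ℝ) (ε η : ℝ)
    (hk1 : 1 ≤ k) (hkN : k ≤ N)
    (hmono : ∀ i j, 1 ≤ i → i ≤ j → j ≤ N → σ j ≤ σ i)
    (hnn : ∀ i ∈ Finset.Icc 1 N, 0 ≤ σ i)
    (ha : ∀ i ∈ Finset.Icc 1 N, a i ∈ Set.Icc (0 : ℝ) 1)
    (hsum : ∑ i ∈ Finset.Icc 1 N, a i = (k : ℝ))
    (hmain : ∑ i ∈ Finset.Icc 1 k, σ i ^ 2 ≤ ∑ i ∈ Finset.Icc 1 N, σ i ^ 2 * a i + ε * σ k ^ 2)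
    (hε : 0 ≤ ε) (hη0 : 0 < η)
    (hLN : L ≤ N)
    (hL : ∀ i ∈ Finset.Icc 1 N, (σ k * (1 + η) ≤ σ i ↔ i ≤ L)) :
    (∑ i ∈ Finset.Icc 1 L, σ i ^ 2 * (1 - a i)
        ≤ ε * (1 + η) ^ 2 * σ k ^ 2 / (2 * η + η ^ 2)) ∧
    ε * (1 + η) ^ 2 * σ k ^ 2 / (2 * η + η ^ 2) ≤ ε * (1 + 1 / η) * σ k ^ 2 := by
  have hk : k ∈ Icc 1 N := mem_Icc.2 ⟨hk1, hkN⟩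
  have hw : AntitoneOn (fun i => σ i ^ 2) ↑(Icc 1 N) := fun i hi j hj hij =>
    pow_le_pow_left₀ (hnn j hj) (hmono i j (mem_Icc.1 hi).1 hij (mem_Icc.1 hj).2) 2
  have hgap := sum_Icc_mul_one_sub_le hw hk ha hsum hmain hLN
  have hhead : (1 + η) ^ 2 * σ k ^ 2 * ∑ i ∈ Icc 1 L, (1 - a i)
      ≤ ∑ i ∈ Icc 1 L, σ i ^ 2 * (1 - a i) := by
    have hσk : 0 ≤ σ k * (1 + η) := mul_nonneg (hnn k hk) (by linarith)
    rw [mul_sum]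
    refine sum_le_sum fun i hi => ?_
    have hiN : i ∈ Icc 1 N := Icc_subset_Icc_right hLN hi
    refine mul_le_mul_of_nonneg_right ?_ (sub_nonneg.2 (ha i hiN).2)
    simpa only [mul_pow, mul_comm] using pow_le_pow_left₀ hσk ((hL i hiN).2 (mem_Icc.1 hi).2) 2
  refine ⟨?_, ?_⟩
  · rw [le_div_iff₀ (by positivity)]
    nlinarith [mul_le_mul_of_nonneg_left hgap (sq_nonneg (1 + η))]
  · calc ε * (1 + η) ^ 2 * σ k ^ 2 / (2 * η + η ^ 2)
        = ε * σ k ^ 2 * ((1 + η) ^ 2 / (2 * η + η ^ 2)) := by ring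
      _ ≤ ε * σ k ^ 2 * (1 + 1 / η) :=
        mul_le_mul_of_nonneg_left (one_add_sq_div_le hη0) (by positivity)
      _ = ε * (1 + 1 / η) * σ k ^ 2 := by ring

theorem stmt_10 (N k L : ℕ) (σ a : ℕ → ℝ) (ε η : ℝ)
    (hk1 : 1 ≤ k) (hkN : k ≤ N)
    (hmono : ∀ i j, 1 ≤ i → i ≤ j → j ≤ N → σ j ≤ σ i)
    (hnn : ∀ i ∈ Finset.Icc 1 N, 0 ≤ σ i)
    (ha : ∀ i ∈ Finset.Icc 1 N, a i ∈ Set.Icc (0 : ℝ) 1)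
    (hsum : ∑ i ∈ Finset.Icc 1 N, a i = (k : ℝ))
    (hmain : ∑ i ∈ Finset.Icc 1 k, σ i ^ 2 ≤ ∑ i ∈ Finset.Icc 1 N, σ i ^ 2 * a i + ε * σ k ^ 2)
    (hε : 0 ≤ ε) (hη0 : 0 < η) (hη1 : η ≤ 1)
    (hLN : L ≤ N)
    (hL : ∀ i ∈ Finset.Icc 1 N, (σ k * (1 + η) ≤ σ i ↔ i ≤ L)) :
    (∑ i ∈ Finset.Icc 1 L, σ i ^ 2 * (1 - a i)
        ≤ ε * (1 + η) ^ 2 * σ k ^ 2 / (2 * η + η ^ 2)) ∧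
    ε * (1 + η) ^ 2 * σ k ^ 2 / (2 * η + η ^ 2) ≤ ε * (1 + 1 / η) * σ k ^ 2 :=
  stmt_10_general N k L σ a ε η hk1 hkN hmono hnn ha hsum hmain hε hη0 hLN hL
end

section
/- Let σ_1 ≥ ... ≥ σ_N ≥ 0, k ≤ N, a_1,...,a_N ∈ [0,1] with Σ a_i = k and Σ_{i=1}^k σ_i² ≤ Σ_{i=1}^N σ_i² a_i + ε σ_k². Let 0 < η ≤ 1 and M = max{i : σ_i ≥ σ_k(1−η)} (with σ_k > 0). Then Σ_{i=M+1}^N σ_i² a_i ≤ ε(1−η)²σ_k²/(2η−η²) ≤ ε(1/η − 1)σ_k². -/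
/-!
Write `s = σ_k`, `τ = s (1 - η)` and `B = ∑_{i > M} a_i`. Moving weight from the head `i ≤ k`
(where `σ_i ≥ s`) to indices `i > k` (where `σ_i ≤ s`) costs at least `s²` per unit, so the
hypothesis gives `s² B ≤ ∑_{i > M} σ_i² a_i + ε s² ≤ τ² B + ε s²`, i.e. `(2η - η²) B ≤ ε`.
The tail sum is then at most `τ² B ≤ ε τ² / (2η - η²)`.
-/

open Finset

theorem sum_sq_mul_le_sq_mul_sum {ι : Type*} (s : Finset ι) (σ a : ι → ℝ) {c : ℝ}
    (hσ : ∀ i ∈ s, 0 ≤ σ i ∧ σ i ≤ c) (ha : ∀ i ∈ s, 0 ≤ a i) :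
    ∑ i ∈ s, σ i ^ 2 * a i ≤ c ^ 2 * ∑ i ∈ s, a i := by
  rw [mul_sum]
  exact sum_le_sum fun i hi =>
    mul_le_mul_of_nonneg_right (pow_le_pow_left₀ (hσ i hi).1 (hσ i hi).2 2) (ha i hi)

theorem sq_mul_sum_le_sum_sq_mul {ι : Type*} (s : Finset ι) (σ a : ι → ℝ) {c : ℝ}
    (hc : 0 ≤ c) (hσ : ∀ i ∈ s, c ≤ σ i) (ha : ∀ i ∈ s, 0 ≤ a i) :
    c ^ 2 * ∑ i ∈ s, a i ≤ ∑ i ∈ s, σ i ^ 2 * a i := by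
  rw [mul_sum]
  exact sum_le_sum fun i hi =>
    mul_le_mul_of_nonneg_right (pow_le_pow_left₀ hc (hσ i hi) 2) (ha i hi)

theorem sq_mul_sum_Ioc_le (N k M : ℕ) (σ a : ℕ → ℝ) (ε : ℝ)
    (hk1 : 1 ≤ k) (hkM : k ≤ M) (hMN : M ≤ N)
    (hmono : ∀ i j, 1 ≤ i → i ≤ j → j ≤ N → σ j ≤ σ i)
    (hnn : ∀ i ∈ Icc 1 N, 0 ≤ σ i)
    (ha : ∀ i ∈ Icc 1 N, a i ∈ Set.Icc (0 : ℝ) 1)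
    (hsum : ∑ i ∈ Icc 1 N, a i = (k : ℝ))
    (hmain : ∑ i ∈ Icc 1 k, σ i ^ 2 ≤ ∑ i ∈ Icc 1 N, σ i ^ 2 * a i + ε * σ k ^ 2) :
    σ k ^ 2 * ∑ i ∈ Ioc M N, a i ≤ ∑ i ∈ Ioc M N, σ i ^ 2 * a i + ε * σ k ^ 2 := by
  have hIcc (n : ℕ) : Icc 1 n = Ioc 0 n := by rw [← Icc_add_one_left_eq_Ioc, zero_add]
  have hsplit (f : ℕ → ℝ) :
      ∑ i ∈ Icc 1 N, f i = ∑ i ∈ Ioc 0 k, f i + ∑ i ∈ Ioc k M, f i + ∑ i ∈ Ioc M N, f i := by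
    rw [hIcc, sum_Ioc_consecutive _ (Nat.zero_le k) hkM, sum_Ioc_consecutive _ (Nat.zero_le M) hMN]
  have hmem {i : ℕ} (h1 : 1 ≤ i) (hN : i ≤ N) : i ∈ Icc 1 N := mem_Icc.2 ⟨h1, hN⟩
  have head : σ k ^ 2 * ∑ i ∈ Ioc 0 k, (1 - a i) ≤ ∑ i ∈ Ioc 0 k, σ i ^ 2 * (1 - a i) := by
    refine sq_mul_sum_le_sum_sq_mul _ _ _ (hnn k (hmem hk1 (hkM.trans hMN))) ?_ ?_ <;>
      intro i hi <;> obtain ⟨hi0, hik⟩ := mem_Ioc.1 hi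
    · exact hmono i k hi0 hik (hkM.trans hMN)
    · exact sub_nonneg.2 (ha i (hmem hi0 (by omega))).2
  have middle : ∑ i ∈ Ioc k M, σ i ^ 2 * a i ≤ σ k ^ 2 * ∑ i ∈ Ioc k M, a i := by
    refine sum_sq_mul_le_sq_mul_sum _ _ _ (fun i hi => ?_) (fun i hi => ?_) <;>
      obtain ⟨hki, hiM⟩ := mem_Ioc.1 hi
    · exact ⟨hnn i (hmem (by omega) (by omega)), hmono k i hk1 hki.le (by omega)⟩
    · exact (ha i (hmem (by omega) (by omega))).1
  simp only [mul_sub, mul_one, sum_sub_distrib, sum_const, Nat.card_Ioc, Nat.sub_zero,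
    nsmul_eq_mul] at head
  rw [hsplit] at hsum hmain
  rw [← hsum, mul_add, mul_add] at head
  rw [hIcc] at hmain
  linarith

theorem mul_le_of_sq_mul_le_add {s η ε B T : ℝ} (hs : 0 < s)
    (htail : T ≤ (s * (1 - η)) ^ 2 * B) (hexch : s ^ 2 * B ≤ T + ε * s ^ 2) :
    (2 * η - η ^ 2) * B ≤ ε := by
  have h : s ^ 2 * ((2 * η - η ^ 2) * B) ≤ s ^ 2 * ε := by linear_combination hexch + htail
  exact le_of_mul_le_mul_left h (pow_pos hs 2)

theorem one_sub_sq_div_le {η : ℝ} (hη0 : 0 < η) (hη1 : η ≤ 1) :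
    (1 - η) ^ 2 / (2 * η - η ^ 2) ≤ 1 / η - 1 := by
  have hD : 0 < 2 * η - η ^ 2 := by nlinarith
  have hfactor : (1 / η - 1) * (2 * η - η ^ 2) = (1 - η) * (2 - η) := by
    field_simp
  rw [div_le_iff₀ hD, hfactor, sq]
  exact mul_le_mul_of_nonneg_left (by linarith) (by linarith)

theorem stmt_11_general (N k M : ℕ) (σ a : ℕ → ℝ) (ε η : ℝ)
    (hk1 : 1 ≤ k) (hkN : k ≤ N)
    (hmono : ∀ i j, 1 ≤ i → i ≤ j → j ≤ N → σ j ≤ σ i)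
    (hnn : ∀ i ∈ Finset.Icc 1 N, 0 ≤ σ i)
    (ha : ∀ i ∈ Finset.Icc 1 N, a i ∈ Set.Icc (0 : ℝ) 1)
    (hsum : ∑ i ∈ Finset.Icc 1 N, a i = (k : ℝ))
    (hmain : ∑ i ∈ Finset.Icc 1 k, σ i ^ 2 ≤ ∑ i ∈ Finset.Icc 1 N, σ i ^ 2 * a i + ε * σ k ^ 2)
    (hη0 : 0 < η) (hη1 : η ≤ 1) (hσk : 0 < σ k)
    (hMN : M ≤ N)
    (hM : ∀ i ∈ Finset.Icc 1 N, (σ k * (1 - η) ≤ σ i ↔ i ≤ M)) :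
    (∑ i ∈ Finset.Icc (M + 1) N, σ i ^ 2 * a i
        ≤ ε * (1 - η) ^ 2 * σ k ^ 2 / (2 * η - η ^ 2)) ∧
    ε * (1 - η) ^ 2 * σ k ^ 2 / (2 * η - η ^ 2) ≤ ε * (1 / η - 1) * σ k ^ 2 := by
  have hkM : k ≤ M := (hM k (mem_Icc.2 ⟨hk1, hkN⟩)).1 (mul_le_of_le_one_right hσk.le (by linarith))
  have hsub {i : ℕ} (hi : i ∈ Ioc M N) : i ∈ Icc 1 N := by
    obtain ⟨hMi, hiN⟩ := mem_Ioc.1 hi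
    exact mem_Icc.2 ⟨by omega, hiN⟩
  have htail : ∑ i ∈ Ioc M N, σ i ^ 2 * a i ≤ (σ k * (1 - η)) ^ 2 * ∑ i ∈ Ioc M N, a i :=
    sum_sq_mul_le_sq_mul_sum _ _ _ (fun i hi => ⟨hnn i (hsub hi), le_of_not_ge fun h =>
      (mem_Ioc.1 hi).1.not_ge ((hM i (hsub hi)).1 h)⟩) fun i hi => (ha i (hsub hi)).1
  have hweight := mul_le_of_sq_mul_le_add hσk htail
    (sq_mul_sum_Ioc_le N k M σ a ε hk1 hkM hMN hmono hnn ha hsum hmain)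
  have hD : 0 < 2 * η - η ^ 2 := by nlinarith
  have hε : 0 ≤ ε := (mul_nonneg hD.le (sum_nonneg fun i hi => (ha i (hsub hi)).1)).trans hweight
  constructor
  · rw [Icc_add_one_left_eq_Ioc, le_div_iff₀ hD]
    calc _ ≤ (σ k * (1 - η)) ^ 2 * (∑ i ∈ Ioc M N, a i) * (2 * η - η ^ 2) :=
          mul_le_mul_of_nonneg_right htail hD.le
      _ ≤ (σ k * (1 - η)) ^ 2 * ε := by
          rw [mul_assoc]; exact mul_le_mul_of_nonneg_left (by linarith) (sq_nonneg _)
      _ = ε * (1 - η) ^ 2 * σ k ^ 2 := by ring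
  · calc ε * (1 - η) ^ 2 * σ k ^ 2 / (2 * η - η ^ 2)
          = ε * σ k ^ 2 * ((1 - η) ^ 2 / (2 * η - η ^ 2)) := by ring
      _ ≤ ε * σ k ^ 2 * (1 / η - 1) :=
          mul_le_mul_of_nonneg_left (one_sub_sq_div_le hη0 hη1) (by positivity)
      _ = ε * (1 / η - 1) * σ k ^ 2 := by ring

theorem stmt_11 (N k M : ℕ) (σ a : ℕ → ℝ) (ε η : ℝ)
    (hk1 : 1 ≤ k) (hkN : k ≤ N)
    (hmono : ∀ i j, 1 ≤ i → i ≤ j → j ≤ N → σ j ≤ σ i)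
    (hnn : ∀ i ∈ Finset.Icc 1 N, 0 ≤ σ i)
    (ha : ∀ i ∈ Finset.Icc 1 N, a i ∈ Set.Icc (0 : ℝ) 1)
    (hsum : ∑ i ∈ Finset.Icc 1 N, a i = (k : ℝ))
    (hmain : ∑ i ∈ Finset.Icc 1 k, σ i ^ 2 ≤ ∑ i ∈ Finset.Icc 1 N, σ i ^ 2 * a i + ε * σ k ^ 2)
    (hε : 0 ≤ ε) (hη0 : 0 < η) (hη1 : η ≤ 1) (hσk : 0 < σ k)
    (hMN : M ≤ N)
    (hM : ∀ i ∈ Finset.Icc 1 N, (σ k * (1 - η) ≤ σ i ↔ i ≤ M)) :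
    (∑ i ∈ Finset.Icc (M + 1) N, σ i ^ 2 * a i
        ≤ ε * (1 - η) ^ 2 * σ k ^ 2 / (2 * η - η ^ 2)) ∧
    ε * (1 - η) ^ 2 * σ k ^ 2 / (2 * η - η ^ 2) ≤ ε * (1 / η - 1) * σ k ^ 2 :=
  stmt_11_general N k M σ a ε η hk1 hkN hmono hnn ha hsum hmain hη0 hη1 hσk hMN hM
end

section
/- Let σ_1 ≥ ... ≥ σ_N ≥ 0, k ≤ N, a_1,...,a_N ∈ [0,1] with Σ a_i = k and Σ_{i=1}^k σ_i² ≤ Σ_{i=1}^N σ_i² a_i + ε σ_k², with σ_k > 0. Let 0 < η ≤ 1 and L = max{i : σ_i ≥ σ_k(1+η)}. Then Σ_{i=1}^L (1 − a_i) ≤ ε/(2η+η²) ≤ ε/η. -/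
/-!
Put `d i = σ i ^ 2 - σ k ^ 2`. Since `∑ a i = k`, the defect
`∑_{i ≤ k} σ i ^ 2 - ∑_{i ≤ N} σ i ^ 2 a i` equals
`∑_{i ≤ k} d i (1 - a i) - ∑_{i > k} d i a i`, and both sums are nonnegative by monotonicity.
Hence `∑_{i ≤ k} d i (1 - a i) ≤ ε σ k ^ 2`; dropping the terms with `L < i ≤ k` and using
`d i ≥ σ k ^ 2 ((1 + η) ^ 2 - 1) = σ k ^ 2 (2 η + η ^ 2)` for `i ≤ L` gives the bound.
-/

open Finset

section

variable {ι R : Type*} [CommRing R] [PartialOrder R] [IsOrderedRing R]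

theorem sum_sub_mul_one_sub_le_sum_sub_sum_mul [DecidableEq ι] {s t : Finset ι}
    (hst : s ⊆ t) (f a : ι → R) (c : R) (hfc : ∀ i ∈ t \ s, f i ≤ c)
    (ha : ∀ i ∈ t \ s, 0 ≤ a i) (hsum : ∑ i ∈ t, a i = #s) :
    ∑ i ∈ s, (f i - c) * (1 - a i) ≤ ∑ i ∈ s, f i - ∑ i ∈ t, f i * a i := by
  have hfa := sum_sdiff hst (f := fun i => f i * a i)
  have ha_split := sum_sdiff hst (f := a)
  have hs : ∑ i ∈ s, (f i - c) * (1 - a i)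
      = ∑ i ∈ s, f i - ∑ i ∈ s, f i * a i - c * #s + c * ∑ i ∈ s, a i := by
    simp only [sub_mul, mul_sub, mul_one, sum_sub_distrib, mul_sum, sum_const, nsmul_eq_mul]
    ring
  have htail : 0 ≤ ∑ i ∈ t \ s, (c - f i) * a i :=
    sum_nonneg fun i hi => mul_nonneg (sub_nonneg.mpr (hfc i hi)) (ha i hi)
  have htail' : ∑ i ∈ t \ s, (c - f i) * a i
      = c * ∑ i ∈ t \ s, a i - ∑ i ∈ t \ s, f i * a i := by
    simp only [sub_mul, sum_sub_distrib, mul_sum]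
  rw [hs]
  linear_combination htail + htail' - hfa + c * ha_split + c * hsum

theorem mul_sum_le_sum_mul_of_subset {u s : Finset ι} (hus : u ⊆ s) {g w : ι → R} {δ : R}
    (hδ : ∀ i ∈ u, δ ≤ g i) (hg : ∀ i ∈ s, 0 ≤ g i) (hw : ∀ i ∈ s, 0 ≤ w i) :
    δ * ∑ i ∈ u, w i ≤ ∑ i ∈ s, g i * w i :=
  calc δ * ∑ i ∈ u, w i
      ≤ ∑ i ∈ u, g i * w i := by
        rw [mul_sum]
        exact sum_le_sum fun i hi => mul_le_mul_of_nonneg_right (hδ i hi) (hw i (hus hi))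
    _ ≤ ∑ i ∈ s, g i * w i :=
        sum_le_sum_of_subset_of_nonneg hus fun i hi _ => mul_nonneg (hg i hi) (hw i hi)

theorem sq_mul_two_mul_add_sq_le_sq_sub_sq {x y η : R} (hx : 0 ≤ x) (hη : 0 ≤ η)
    (h : x * (1 + η) ≤ y) : x ^ 2 * (2 * η + η ^ 2) ≤ y ^ 2 - x ^ 2 := by
  linear_combination pow_le_pow_left₀ (mul_nonneg hx (add_nonneg zero_le_one hη)) h 2

end

theorem stmt_12_general (N k L : ℕ) (σ a : ℕ → ℝ) (ε η : ℝ)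
    (hk1 : 1 ≤ k) (hkN : k ≤ N)
    (hmono : ∀ i j, 1 ≤ i → i ≤ j → j ≤ N → σ j ≤ σ i)
    (hnn : ∀ i ∈ Finset.Icc 1 N, 0 ≤ σ i)
    (ha : ∀ i ∈ Finset.Icc 1 N, a i ∈ Set.Icc (0 : ℝ) 1)
    (hsum : ∑ i ∈ Finset.Icc 1 N, a i = (k : ℝ))
    (hmain : ∑ i ∈ Finset.Icc 1 k, σ i ^ 2 ≤ ∑ i ∈ Finset.Icc 1 N, σ i ^ 2 * a i + ε * σ k ^ 2)
    (hε : 0 ≤ ε) (hη0 : 0 < η) (hσk : 0 < σ k)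
    (hL : ∀ i ∈ Finset.Icc 1 N, (σ k * (1 + η) ≤ σ i ↔ i ≤ L)) :
    (∑ i ∈ Finset.Icc 1 L, (1 - a i) ≤ ε / (2 * η + η ^ 2)) ∧
    ε / (2 * η + η ^ 2) ≤ ε / η := by
  have hkN' : Icc 1 k ⊆ Icc 1 N := Icc_subset_Icc_right hkN
  have hLk : L < k := by
    by_contra! hkL
    have := (hL k (mem_Icc.mpr ⟨hk1, hkN⟩)).mpr hkL
    nlinarith
  have hLk' : Icc 1 L ⊆ Icc 1 k := Icc_subset_Icc_right hLk.le
  have hgap : ∀ i ∈ Icc 1 L, σ k ^ 2 * (2 * η + η ^ 2) ≤ σ i ^ 2 - σ k ^ 2 := fun i hi =>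
    sq_mul_two_mul_add_sq_le_sq_sub_sq hσk.le hη0.le
      ((hL i (hkN' (hLk' hi))).mpr (mem_Icc.mp hi).2)
  have hhead : ∀ i ∈ Icc 1 k, σ k ^ 2 ≤ σ i ^ 2 := fun i hi =>
    pow_le_pow_left₀ hσk.le (hmono i k (mem_Icc.mp hi).1 (mem_Icc.mp hi).2 hkN) 2
  have htail : ∀ i ∈ Icc 1 N \ Icc 1 k, σ i ^ 2 ≤ σ k ^ 2 := by
    intro i hi
    obtain ⟨hiN, hik⟩ := mem_sdiff.mp hi
    have hki : k ≤ i := by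
      by_contra! hik'
      exact hik (mem_Icc.mpr ⟨(mem_Icc.mp hiN).1, hik'.le⟩)
    exact pow_le_pow_left₀ (hnn i hiN) (hmono k i hk1 hki (mem_Icc.mp hiN).2) 2
  have hdefect : ∑ i ∈ Icc 1 k, (σ i ^ 2 - σ k ^ 2) * (1 - a i) ≤ ε * σ k ^ 2 :=
    (sum_sub_mul_one_sub_le_sum_sub_sum_mul hkN' (fun i => σ i ^ 2) a _ htail
      (fun i hi => (ha i (mem_sdiff.mp hi).1).1) (by simpa using hsum)).trans (by linarith)
  have hlow := mul_sum_le_sum_mul_of_subset hLk' hgap (fun i hi => sub_nonneg.mpr (hhead i hi))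
    (fun i hi => sub_nonneg.mpr (ha i (hkN' hi)).2)
  constructor
  · rw [le_div_iff₀ (by positivity), ← mul_le_mul_iff_right₀ (pow_pos hσk 2)]
    linarith
  · exact div_le_div_of_nonneg_left hε hη0 (by nlinarith)

theorem stmt_12 (N k L : ℕ) (σ a : ℕ → ℝ) (ε η : ℝ)
    (hk1 : 1 ≤ k) (hkN : k ≤ N)
    (hmono : ∀ i j, 1 ≤ i → i ≤ j → j ≤ N → σ j ≤ σ i)
    (hnn : ∀ i ∈ Finset.Icc 1 N, 0 ≤ σ i)
    (ha : ∀ i ∈ Finset.Icc 1 N, a i ∈ Set.Icc (0 : ℝ) 1)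
    (hsum : ∑ i ∈ Finset.Icc 1 N, a i = (k : ℝ))
    (hmain : ∑ i ∈ Finset.Icc 1 k, σ i ^ 2 ≤ ∑ i ∈ Finset.Icc 1 N, σ i ^ 2 * a i + ε * σ k ^ 2)
    (hε : 0 ≤ ε) (hη0 : 0 < η) (hη1 : η ≤ 1) (hσk : 0 < σ k)
    (hLN : L ≤ N)
    (hL : ∀ i ∈ Finset.Icc 1 N, (σ k * (1 + η) ≤ σ i ↔ i ≤ L)) :
    (∑ i ∈ Finset.Icc 1 L, (1 - a i) ≤ ε / (2 * η + η ^ 2)) ∧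
    ε / (2 * η + η ^ 2) ≤ ε / η :=
  stmt_12_general N k L σ a ε η hk1 hkN hmono hnn ha hsum hmain hε hη0 hσk hL
end

section
/- Let T, T̃ ∈ R^{m×n} with ‖T − T̃‖_F ≤ ε‖T‖_F, and let S ⊆ [m] be a set of rows with |S| ≥ (1−ζ)m and ‖T_i‖² ≥ (1/(1+γ))‖T‖_F²/m for all i ∈ S, where all rows T_i, T̃_i for i ∈ S are nonzero. Then (1/|S|)·Σ_{i∈S} ‖D_{T_i} − D_{T̃_i}‖_TV ≤ 2ε√(1+γ)/(1−ζ). -/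
/-!
For a row `u` write `û = u / ‖u‖`, so that `D_u` has density `û_j ^ 2`. Factoring
`û_j ^ 2 - v̂_j ^ 2 = (û_j - v̂_j)(û_j + v̂_j)` and applying Cauchy–Schwarz gives
`‖D_u - D_v‖_TV ≤ ‖û - v̂‖ ≤ 2 ‖u - v‖ / ‖u‖`. On `S` every row has `‖T_i‖ ≥ ‖T‖_F / √((1 + γ) m)`,
and Cauchy–Schwarz over the rows bounds `∑_{i ∈ S} ‖T_i - T̃_i‖` by `√|S| ε ‖T‖_F`; averaging
leaves `2 ε √(1 + γ) √(m / |S|) ≤ 2 ε √(1 + γ) / (1 - ζ)`.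
-/

open Finset

section Normalize

variable {E : Type*} [NormedAddCommGroup E] [NormedSpace ℝ E]

lemma norm_inv_norm_smul_le_one (v : E) : ‖‖v‖⁻¹ • v‖ ≤ 1 := by
  rcases eq_or_ne v 0 with rfl | hv
  · simp
  · exact (norm_smul_inv_norm hv).le

lemma norm_smul_inv_norm_smul (v : E) : ‖v‖ • ‖v‖⁻¹ • v = v := by
  rcases eq_or_ne v 0 with rfl | hv
  · simp
  · rw [smul_smul, mul_inv_cancel₀ (norm_ne_zero_iff.2 hv), one_smul]

/-- Since `‖u‖ • (û - v̂) = (u - v) + (‖v‖ - ‖u‖) • v̂`, both terms are bounded by `‖u - v‖`. -/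
lemma norm_mul_norm_inv_norm_smul_sub_le (u v : E) :
    ‖u‖ * ‖‖u‖⁻¹ • u - ‖v‖⁻¹ • v‖ ≤ 2 * ‖u - v‖ := by
  set v' := ‖v‖⁻¹ • v
  have hsplit : ‖u‖ • (‖u‖⁻¹ • u - v') = (u - v) + (‖v‖ - ‖u‖) • v' := by
    rw [smul_sub, norm_smul_inv_norm_smul, sub_smul, norm_smul_inv_norm_smul]
    abel
  calc ‖u‖ * ‖‖u‖⁻¹ • u - v'‖ = ‖(u - v) + (‖v‖ - ‖u‖) • v'‖ := by
        rw [← hsplit, norm_smul, norm_norm]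
    _ ≤ ‖u - v‖ + |‖v‖ - ‖u‖| * ‖v'‖ := by
        rw [← Real.norm_eq_abs, ← norm_smul]
        exact norm_add_le _ _
    _ ≤ ‖u - v‖ + ‖u - v‖ * 1 := by
        gcongr
        · rw [abs_sub_comm]
          exact abs_norm_sub_norm_le u v
        · exact norm_inv_norm_smul_le_one v
    _ = 2 * ‖u - v‖ := by ring

end Normalize

section Euclidean

variable {ι : Type*} [Fintype ι]

lemma EuclideanSpace.sum_abs_sq_sub_sq_le (x y : EuclideanSpace ℝ ι) :
    ∑ j, |x j ^ 2 - y j ^ 2| ≤ ‖x - y‖ * ‖x + y‖ := by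
  calc ∑ j, |x j ^ 2 - y j ^ 2| = ∑ j, |x j - y j| * |x j + y j| := by
        simp_rw [← abs_mul, sq_sub_sq, mul_comm]
    _ ≤ √(∑ j, |x j - y j| ^ 2) * √(∑ j, |x j + y j| ^ 2) :=
        Real.sum_mul_le_sqrt_mul_sqrt _ _ _
    _ = ‖x - y‖ * ‖x + y‖ := by simp [EuclideanSpace.norm_eq]

end Euclidean

section Distribution

variable {ι : Type*} [Fintype ι]

/-- The distribution `D_v` on `ι` with density `v j ^ 2 / ‖v‖ ^ 2` (the zero function when `v = 0`). -/
noncomputable def sqNormDist (v : ι → ℝ) : ι → ℝ := fun j => v j ^ 2 / ∑ j', v j' ^ 2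

/-- The total variation distance `‖p - q‖_TV`. -/
noncomputable def tvDist (p q : ι → ℝ) : ℝ := (1 / 2) * ∑ j, |p j - q j|

lemma tvDist_nonneg (p q : ι → ℝ) : 0 ≤ tvDist p q := by
  unfold tvDist
  positivity

lemma sqNormDist_eq_sq_inv_norm_smul (v : ι → ℝ) (j : ι) :
    sqNormDist v j = ((‖WithLp.toLp 2 v‖⁻¹ • WithLp.toLp 2 v : EuclideanSpace ℝ ι) j) ^ 2 := by
  rw [sqNormDist, ← EuclideanSpace.real_norm_sq_eq]
  simp [mul_pow, div_eq_inv_mul]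

lemma tvDist_sqNormDist_le_norm_inv_norm_smul_sub (u v : ι → ℝ) :
    tvDist (sqNormDist u) (sqNormDist v) ≤
      ‖‖WithLp.toLp 2 u‖⁻¹ • WithLp.toLp 2 u - ‖WithLp.toLp 2 v‖⁻¹ • WithLp.toLp 2 v‖ := by
  set x : EuclideanSpace ℝ ι := ‖WithLp.toLp 2 u‖⁻¹ • WithLp.toLp 2 u
  set y : EuclideanSpace ℝ ι := ‖WithLp.toLp 2 v‖⁻¹ • WithLp.toLp 2 v
  have hxy : ‖x + y‖ ≤ 2 := by
    calc ‖x + y‖ ≤ ‖x‖ + ‖y‖ := norm_add_le x y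
      _ ≤ 1 + 1 := add_le_add (norm_inv_norm_smul_le_one _) (norm_inv_norm_smul_le_one _)
      _ = 2 := by norm_num
  calc tvDist (sqNormDist u) (sqNormDist v) = (1 / 2) * ∑ j, |x j ^ 2 - y j ^ 2| := by
        simp only [tvDist, sqNormDist_eq_sq_inv_norm_smul, x, y]
    _ ≤ (1 / 2) * (‖x - y‖ * 2) := by
        gcongr
        exact (EuclideanSpace.sum_abs_sq_sub_sq_le x y).trans (by gcongr)
    _ = ‖x - y‖ := by ring

lemma sqrt_sum_sq_mul_tvDist_sqNormDist_le (u v : ι → ℝ) :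
    √(∑ j, u j ^ 2) * tvDist (sqNormDist u) (sqNormDist v) ≤ 2 * √(∑ j, (u j - v j) ^ 2) := by
  have hu : ‖(WithLp.toLp 2 u : EuclideanSpace ℝ ι)‖ = √(∑ j, u j ^ 2) := by
    simp [EuclideanSpace.norm_eq]
  have huv : ‖(WithLp.toLp 2 u - WithLp.toLp 2 v : EuclideanSpace ℝ ι)‖ =
      √(∑ j, (u j - v j) ^ 2) := by
    simp [EuclideanSpace.norm_eq]
  rw [← hu, ← huv]
  exact (mul_le_mul_of_nonneg_left (tvDist_sqNormDist_le_norm_inv_norm_smul_sub u v)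
    (norm_nonneg _)).trans (norm_mul_norm_inv_norm_smul_sub_le _ _)

end Distribution

lemma Finset.sum_sqrt_le_sqrt_card_mul_sqrt_sum {ι : Type*} [Fintype ι] (S : Finset ι)
    {a : ι → ℝ} (ha : ∀ i, 0 ≤ a i) : ∑ i ∈ S, √(a i) ≤ √(#S : ℝ) * √(∑ i, a i) := by
  calc ∑ i ∈ S, √(a i) ≤ √(#S : ℝ) * √(∑ i ∈ S, a i) := by
        simpa using Real.sum_sqrt_mul_sqrt_le S (f := fun _ => 1) (fun _ => zero_le_one) ha
    _ ≤ √(#S : ℝ) * √(∑ i, a i) :=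
        mul_le_mul_of_nonneg_left (Real.sqrt_le_sqrt (S.sum_le_univ_sum_of_nonneg ha))
          (Real.sqrt_nonneg _)

lemma sum_sum_sq_pos_of_ne_zero {ι κ : Type*} [Fintype ι] [Fintype κ] {u : ι → κ → ℝ} {i : ι}
    (hu : u i ≠ 0) : 0 < ∑ i, ∑ j, u i j ^ 2 := by
  obtain ⟨j, hj⟩ := Function.ne_iff.1 hu
  have hj : u i j ≠ 0 := hj
  exact sum_pos' (fun i _ => by positivity)
    ⟨i, mem_univ _, sum_pos' (fun j _ => by positivity) ⟨j, mem_univ _, by positivity⟩⟩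

lemma sum_tvDist_sqNormDist_le {ι κ : Type*} [Fintype ι] [Fintype κ] (u v : ι → κ → ℝ)
    (S : Finset ι) {F s δ : ℝ} (hF : 0 < F) (hs : 0 ≤ s)
    (hrow : ∀ i ∈ S, F ≤ s * √(∑ j, u i j ^ 2))
    (hclose : √(∑ i, ∑ j, (u i j - v i j) ^ 2) ≤ δ * F) :
    ∑ i ∈ S, tvDist (sqNormDist (u i)) (sqNormDist (v i)) ≤ 2 * s * √(#S : ℝ) * δ := by
  have hrowTV : ∀ i ∈ S, F * tvDist (sqNormDist (u i)) (sqNormDist (v i)) ≤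
      s * (2 * √(∑ j, (u i j - v i j) ^ 2)) := fun i hi =>
    calc F * tvDist (sqNormDist (u i)) (sqNormDist (v i))
        ≤ s * (√(∑ j, u i j ^ 2) * tvDist (sqNormDist (u i)) (sqNormDist (v i))) := by
          rw [← mul_assoc]
          exact mul_le_mul_of_nonneg_right (hrow i hi) (tvDist_nonneg _ _)
      _ ≤ s * (2 * √(∑ j, (u i j - v i j) ^ 2)) :=
          mul_le_mul_of_nonneg_left (sqrt_sum_sq_mul_tvDist_sqNormDist_le _ _) hs
  have herr : ∑ i ∈ S, √(∑ j, (u i j - v i j) ^ 2) ≤ √(#S : ℝ) * (δ * F) :=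
    (S.sum_sqrt_le_sqrt_card_mul_sqrt_sum fun i => by positivity).trans (by gcongr)
  refine le_of_mul_le_mul_left ?_ hF
  calc F * ∑ i ∈ S, tvDist (sqNormDist (u i)) (sqNormDist (v i))
      ≤ ∑ i ∈ S, s * (2 * √(∑ j, (u i j - v i j) ^ 2)) := by
        rw [mul_sum]
        exact sum_le_sum hrowTV
    _ = 2 * s * ∑ i ∈ S, √(∑ j, (u i j - v i j) ^ 2) := by
        rw [mul_sum]
        exact sum_congr rfl fun i _ => by ring
    _ ≤ F * (2 * s * √(#S : ℝ) * δ) := by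
        nlinarith [mul_le_mul_of_nonneg_left herr (by positivity : (0 : ℝ) ≤ 2 * s)]

lemma Real.sqrt_le_sqrt_mul_sqrt_of_div_le {a b c : ℝ} (hc : 0 < c) (h : a / c ≤ b) :
    √a ≤ √c * √b := by
  rw [← Real.sqrt_mul hc.le]
  exact Real.sqrt_le_sqrt ((div_le_iff₀' hc).1 h)

lemma sqrt_mul_mul_sqrt_div_le {K m c ζ : ℝ} (hK : 0 ≤ K) (hm : 0 ≤ m) (hc : 0 < c)
    (hζ0 : 0 ≤ ζ) (hζ1 : ζ < 1) (h : (1 - ζ) * m ≤ c) :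
    √(K * m) * √c / c ≤ √K / (1 - ζ) := by
  have hζ : 0 < 1 - ζ := by linarith
  rw [div_le_div_iff₀ hc hζ]
  refine (pow_le_pow_iff_left₀ (by positivity) (by positivity) two_ne_zero).1 ?_
  rw [mul_pow, mul_pow, mul_pow, Real.sq_sqrt (by positivity), Real.sq_sqrt hc.le,
    Real.sq_sqrt hK]
  have : (1 - ζ) ^ 2 * m ≤ c := by nlinarith
  nlinarith [mul_le_mul_of_nonneg_left this (mul_nonneg hK hc.le)]

theorem stmt_18_general {m n : ℕ} (T Tt : Matrix (Fin m) (Fin n) ℝ) (S : Finset (Fin m))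
    (ε γ ζ : ℝ) (hγ : 0 < γ) (hζ0 : 0 ≤ ζ) (hζ1 : ζ < 1) (hε : 0 < ε)
    (hclose : Real.sqrt (∑ i, ∑ j, (T i j - Tt i j) ^ 2)
        ≤ ε * Real.sqrt (∑ i, ∑ j, T i j ^ 2))
    (hcard : (1 - ζ) * m ≤ (S.card : ℝ))
    (hrow : ∀ i ∈ S, (1 / (1 + γ)) * (∑ i', ∑ j, T i' j ^ 2) / m ≤ ∑ j, T i j ^ 2)
    (hTne : ∀ i ∈ S, (fun j => T i j) ≠ 0) :
    (1 / (S.card : ℝ)) * ∑ i ∈ S,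
        (1 / 2) * ∑ j, |T i j ^ 2 / (∑ j', T i j' ^ 2) - Tt i j ^ 2 / (∑ j', Tt i j' ^ 2)|
      ≤ 2 * ε * Real.sqrt (1 + γ) / (1 - ζ) := by
  rcases S.eq_empty_or_nonempty with rfl | ⟨i₀, hi₀⟩
  · simp only [card_empty, sum_empty, mul_zero]
    have : 0 < 1 - ζ := by linarith
    positivity
  have hm : (0 : ℝ) < m := by exact_mod_cast i₀.pos
  have hS : (0 : ℝ) < #S := by exact_mod_cast card_pos.2 ⟨i₀, hi₀⟩
  have hrowF : ∀ i ∈ S, √(∑ i, ∑ j, T i j ^ 2) ≤ √((1 + γ) * m) * √(∑ j, T i j ^ 2) :=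
    fun i hi => Real.sqrt_le_sqrt_mul_sqrt_of_div_le (by positivity)
      (by simpa only [one_div_mul_eq_div, div_div] using hrow i hi)
  have hsum := sum_tvDist_sqNormDist_le T Tt S
    (Real.sqrt_pos.2 (sum_sum_sq_pos_of_ne_zero (hTne i₀ hi₀))) (Real.sqrt_nonneg _) hrowF hclose
  calc (1 / (#S : ℝ)) * ∑ i ∈ S, tvDist (sqNormDist (T i)) (sqNormDist (Tt i))
      ≤ (1 / #S) * (2 * √((1 + γ) * m) * √(#S : ℝ) * ε) := by gcongr
    _ = 2 * ε * (√((1 + γ) * m) * √(#S : ℝ) / #S) := by ring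
    _ ≤ 2 * ε * (√(1 + γ) / (1 - ζ)) := mul_le_mul_of_nonneg_left
        (sqrt_mul_mul_sqrt_div_le (by positivity) hm.le hS hζ0 hζ1 hcard) (by positivity)
    _ = 2 * ε * √(1 + γ) / (1 - ζ) := by ring

theorem stmt_18 {m n : ℕ} (T Tt : Matrix (Fin m) (Fin n) ℝ) (S : Finset (Fin m))
    (ε γ ζ : ℝ) (hγ : 0 < γ) (hζ0 : 0 ≤ ζ) (hζ1 : ζ < 1) (hε : 0 < ε)
    (hclose : Real.sqrt (∑ i, ∑ j, (T i j - Tt i j) ^ 2)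
        ≤ ε * Real.sqrt (∑ i, ∑ j, T i j ^ 2))
    (hcard : (1 - ζ) * m ≤ (S.card : ℝ))
    (hrow : ∀ i ∈ S, (1 / (1 + γ)) * (∑ i', ∑ j, T i' j ^ 2) / m ≤ ∑ j, T i j ^ 2)
    (hTne : ∀ i ∈ S, (fun j => T i j) ≠ 0)
    (hTtne : ∀ i ∈ S, (fun j => Tt i j) ≠ 0) :
    (1 / (S.card : ℝ)) * ∑ i ∈ S,
        (1 / 2) * ∑ j, |T i j ^ 2 / (∑ j', T i j' ^ 2) - Tt i j ^ 2 / (∑ j', Tt i j' ^ 2)|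
      ≤ 2 * ε * Real.sqrt (1 + γ) / (1 - ζ) :=
  stmt_18_general T Tt S ε γ ζ hγ hζ0 hζ1 hε hclose hcard hrow hTne
end
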